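/- arXiv:2601.21839 — 2 statements merged into one kernel-verified Lean document; each statement's English description precedes it below -/
import Mathlib

section
/- Let x_1 > x_2 > ... > x_N be real numbers, y_1, ..., y_N ≥ 0, and σ^β the softmax with inverse temperature β > 0. Then Σ_{i=1}^N y_i σ^β(x)_i ≥ y_1 − exp(−β(x_1 − x_2)) · Σ_{i=2}^N (y_i + y_1). -/
/-!
Every non-leading softmax weight is at most `exp (β (x i - x 0)) ≤ exp (-β (x 0 - x 1))`, so the
leading weight is at least `1 - ∑_{i ≠ 0} exp (-β (x 0 - x 1))`, and the average is at least
`y 0` times the leading weight because the `y i` are nonnegative.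
-/

open Finset Real

section Softmax

variable {ι : Type*} [Fintype ι]

noncomputable def softmax (β : ℝ) (x : ι → ℝ) (i : ι) : ℝ :=
  exp (β * x i) / ∑ j, exp (β * x j)

theorem softmax_nonneg (β : ℝ) (x : ι → ℝ) (i : ι) : 0 ≤ softmax β x i :=
  div_nonneg (exp_nonneg _) (sum_nonneg fun _ _ => exp_nonneg _)

theorem sum_softmax [Nonempty ι] (β : ℝ) (x : ι → ℝ) : ∑ i, softmax β x i = 1 := by
  have hS : 0 < ∑ j, exp (β * x j) := sum_pos (fun _ _ => exp_pos _) univ_nonempty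
  simp only [softmax, ← sum_div, div_self hS.ne']

theorem softmax_le_exp_mul_sub (β : ℝ) (x : ι → ℝ) (i j : ι) :
    softmax β x i ≤ exp (β * (x i - x j)) :=
  calc softmax β x i ≤ exp (β * x i) / exp (β * x j) :=
        div_le_div_of_nonneg_left (exp_nonneg _) (exp_pos _)
          (single_le_sum (f := fun k => exp (β * x k)) (fun _ _ => (exp_pos _).le) (mem_univ j))
    _ = exp (β * (x i - x j)) := by rw [← exp_sub, mul_sub]

end Softmax

theorem sub_mul_sum_erase_le_sum_mul {ι : Type*} [Fintype ι] [DecidableEq ι] {w y : ι → ℝ}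
    (hw : ∀ i, 0 ≤ w i) (hw_sum : ∑ i, w i = 1) (hy : ∀ i, 0 ≤ y i) (a : ι) {E : ℝ}
    (hE : ∀ i ∈ univ.erase a, w i ≤ E) :
    y a - E * ∑ i ∈ univ.erase a, (y i + y a) ≤ ∑ i, y i * w i := by
  have hw_a : w a = 1 - ∑ i ∈ univ.erase a, w i := by
    rw [← hw_sum, ← add_sum_erase univ w (mem_univ a)]; ring
  have h_tail : y a * ∑ i ∈ univ.erase a, w i ≤ E * ∑ i ∈ univ.erase a, (y i + y a) := by
    rw [mul_sum, mul_sum]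
    refine sum_le_sum fun i hi => ?_
    nlinarith [hE i hi, hw i, hy i, hy a]
  calc y a - E * ∑ i ∈ univ.erase a, (y i + y a)
      ≤ y a * w a := by rw [hw_a]; linarith
    _ ≤ ∑ i, y i * w i :=
      single_le_sum (f := fun i => y i * w i) (fun i _ => mul_nonneg (hy i) (hw i)) (mem_univ a)

/-- **Softmax-weighted average lower bound.** If `x 0 > x 1 > ... > x (N-1)`, `y i ≥ 0`,
and `β > 0`, then `∑ i, y i · σ^β(x)_i ≥ y 0 − exp(−β(x 0 − x 1)) · ∑_{i ≠ 0} (y i + y 0)`. -/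
theorem softmax_average_lower_bound (N : ℕ) (hN : 2 ≤ N) (x y : Fin N → ℝ)
    (hx : StrictAnti x) (hy : ∀ i, 0 ≤ y i) (β : ℝ) (hβ : 0 < β) :
    (∑ i, y i * (Real.exp (β * x i) / (∑ j, Real.exp (β * x j))))
      ≥ y ⟨0, by omega⟩ -
        Real.exp (-β * (x ⟨0, by omega⟩ - x ⟨1, by omega⟩)) *
          ∑ i ∈ Finset.univ.erase (⟨0, by omega⟩ : Fin N), (y i + y ⟨0, by omega⟩) := by
  have : Nonempty (Fin N) := ⟨⟨0, by omega⟩⟩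
  have h_gap : ∀ i ∈ univ.erase (⟨0, by omega⟩ : Fin N),
      softmax β x i ≤ exp (-β * (x ⟨0, by omega⟩ - x ⟨1, by omega⟩)) := by
    intro i hi
    have hi1 : (⟨1, by omega⟩ : Fin N) ≤ i :=
      Nat.one_le_iff_ne_zero.mpr fun h => ne_of_mem_erase hi (Fin.ext h)
    calc softmax β x i ≤ exp (β * (x i - x ⟨0, by omega⟩)) := softmax_le_exp_mul_sub β x i _
      _ ≤ _ := exp_le_exp.mpr (by nlinarith [hx.antitone hi1])
  exact sub_mul_sum_erase_le_sum_mul (softmax_nonneg β x) (sum_softmax β x) hy _ h_gap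
end

section
/- In a test-time compute game with boundedly rational users, any unilateral deviation by a provider i that strictly increases their utility strictly increases the potential Φ(θ) = Σ_{j=1}^N log(p_j(θ_j) − c_j(θ_j)) + β·Σ_{j=1}^N V_j(θ_j) − log(exp(βV_0) + Σ_{j=1}^N exp(βV_j(θ_j))). That is, if U_i(θ'_i; θ_{−i}) > U_i(θ_i; θ_{−i}) then Φ(θ'_i; θ_{−i}) > Φ(θ). -/
/-! Taking logarithms, `log U_i = log (p_i − c_i) + β V_i − log (exp (β V₀) + ∑_j exp (β V_j))`.
The potential `Φ` has the same last term, and its first two sums change under a unilateral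
deviation of provider `i` only through their `i`-th summands, so `Φ(θ'_i; θ_{−i}) − Φ(θ)` equals
`log U_i(θ'_i; θ_{−i}) − log U_i(θ)`; strict monotonicity of `log` concludes. -/

open Real Function

theorem Finset.sum_apply_update_sub_sum {ι α M : Type*} [Fintype ι] [DecidableEq ι]
    [AddCommGroup M] (f : ι → α → M) (θ : ι → α) (i : ι) (t : α) :
    ∑ j, f j (update θ i t j) - ∑ j, f j (θ j) = f i t - f i (θ i) := by
  have hupdate : (fun j => f j (update θ i t j)) = update (fun j => f j (θ j)) i (f i t) :=
    funext fun j => apply_update f θ i t j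
  rw [hupdate, Finset.sum_update_of_mem (Finset.mem_univ i),
    ← Finset.add_sum_erase _ _ (Finset.mem_univ i), Finset.sdiff_singleton_eq_erase]
  abel

theorem Real.log_exp_div_mul {v D x : ℝ} (hD : 0 < D) (hx : 0 < x) :
    log (exp v / D * x) = v - log D + log x := by
  rw [log_mul (div_pos (exp_pos v) hD).ne' hx.ne', log_div (exp_ne_zero v) hD.ne', log_exp]

theorem bounded_rationality_potential_general (N : ℕ) (Θ : Type*)
    (p c q : Fin N → Θ → ℝ)
    (hprofit : ∀ i t, 0 < p i t - c i t)
    (V₀ β : ℝ)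
    (θ : Fin N → Θ) (i : Fin N) (θ' : Θ)
    (hU : (Real.exp (β * (q i θ' - p i θ')) /
            (Real.exp (β * V₀) +
              ∑ j, Real.exp (β * (q j (Function.update θ i θ' j) - p j (Function.update θ i θ' j)))))
          * (p i θ' - c i θ')
        > (Real.exp (β * (q i (θ i) - p i (θ i))) /
            (Real.exp (β * V₀) + ∑ j, Real.exp (β * (q j (θ j) - p j (θ j)))))
          * (p i (θ i) - c i (θ i))) :
    (∑ j, Real.log (p j (Function.update θ i θ' j) - c j (Function.update θ i θ' j)))
      + β * ∑ j, (q j (Function.update θ i θ' j) - p j (Function.update θ i θ' j))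
      - Real.log (Real.exp (β * V₀) +
          ∑ j, Real.exp (β * (q j (Function.update θ i θ' j) - p j (Function.update θ i θ' j))))
    > (∑ j, Real.log (p j (θ j) - c j (θ j)))
      + β * ∑ j, (q j (θ j) - p j (θ j))
      - Real.log (Real.exp (β * V₀) + ∑ j, Real.exp (β * (q j (θ j) - p j (θ j)))) := by
  have hlogU := log_lt_log (by have := hprofit i (θ i); positivity) hU
  rw [log_exp_div_mul (by positivity) (hprofit i θ'),
    log_exp_div_mul (by positivity) (hprofit i (θ i))] at hlogU
  have hlog_profit := Finset.sum_apply_update_sub_sum (fun j t => log (p j t - c j t)) θ i θ'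
  have hvalue := Finset.sum_apply_update_sub_sum (fun j t => q j t - p j t) θ i θ'
  linear_combination hlogU - hlog_profit - β * hvalue

/-- **Bounded-rationality potential.** In the test-time compute game with boundedly rational
users, any unilateral deviation by provider `i` that strictly increases their utility
strictly increases the potential
`Φ(θ) = ∑_j log(p_j(θ_j) − c_j(θ_j)) + β·∑_j V_j(θ_j) − log(exp(βV₀) + ∑_j exp(βV_j(θ_j)))`,
where `V_j(θ) = q_j(θ) − p_j(θ)`, the market share is
`s_i(θ) = exp(βV_i(θ_i)) / (exp(βV₀) + ∑_j exp(βV_j(θ_j)))`, and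
`U_i(θ) = s_i(θ)·(p_i(θ_i) − c_i(θ_i))`. -/
theorem bounded_rationality_potential (N : ℕ) (Θ : Type*) [Fintype Θ]
    (p c q : Fin N → Θ → ℝ)
    (hprofit : ∀ i t, 0 < p i t - c i t) (hq : ∀ i t, 0 ≤ q i t)
    (V₀ β : ℝ) (hβ : 0 < β)
    (θ : Fin N → Θ) (i : Fin N) (θ' : Θ)
    (hU : (Real.exp (β * (q i θ' - p i θ')) /
            (Real.exp (β * V₀) +
              ∑ j, Real.exp (β * (q j (Function.update θ i θ' j) - p j (Function.update θ i θ' j)))))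
          * (p i θ' - c i θ')
        > (Real.exp (β * (q i (θ i) - p i (θ i))) /
            (Real.exp (β * V₀) + ∑ j, Real.exp (β * (q j (θ j) - p j (θ j)))))
          * (p i (θ i) - c i (θ i))) :
    (∑ j, Real.log (p j (Function.update θ i θ' j) - c j (Function.update θ i θ' j)))
      + β * ∑ j, (q j (Function.update θ i θ' j) - p j (Function.update θ i θ' j))
      - Real.log (Real.exp (β * V₀) +
          ∑ j, Real.exp (β * (q j (Function.update θ i θ' j) - p j (Function.update θ i θ' j))))
    > (∑ j, Real.log (p j (θ j) - c j (θ j)))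
      + β * ∑ j, (q j (θ j) - p j (θ j))
      - Real.log (Real.exp (β * V₀) + ∑ j, Real.exp (β * (q j (θ j) - p j (θ j)))) :=
  bounded_rationality_potential_general N Θ p c q hprofit V₀ β θ i θ' hU
end
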